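/- For every integer k ≥ 2 and sufficiently small ε > 0, consider the matching instance with n = 2k agents and items where for i ≤ k agent i values item i at k/(k+1), item i+k at 1/(k+1), and other items at 0, and for i > k agent i values items 1,...,k at 1/(2k)+ε each and items k+1,...,2k at 1/(2k)−ε each. Then the optimal utilitarian social welfare is at least k²/(k+1) + 1/2 − kε, while every iEF lottery has expected utilitarian welfare at most k/(k+1) + 1/2 + kε; hence the price of iEF with respect to utilitarian welfare is Ω(n). -/

import Mathlib

/-!
Every matching in the support of an iEF lottery is proportional. In this instance each row of
valuations sums to `1`, so every agent needs value at least `1/(2k)`: the agents `i ≥ k` must get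
items `< k`, which leaves only the items `≥ k` to the agents `i < k`, and the only such item agent
`i` values is `i + k`. So every supported matching has welfare exactly `k/(k+1) + 1/2 + kε`,
whereas the identity matching has welfare `k²/(k+1) + 1/2 - kε`.
-/

open Finset

/-- Probability that agent `i` receives item `j` under a lottery `x` over matchings. -/
def prMatch {n : ℕ} (x : Equiv.Perm (Fin n) → ℝ) (i j : Fin n) : ℝ :=
  ∑ b ∈ Finset.univ.filter (fun b : Equiv.Perm (Fin n) => b i = j), x b

/-- Interim envy-freeness of a lottery over matchings: for all agents `i ≠ k` and every
item `j` received by `i` with positive probability, `v_i(j) ≥ E[v_i(b(k)) | b(i) = j]`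
(stated multiplied through by the positive probability `Pr[b(i) = j]`). -/
def MIEF {n : ℕ} (v : Fin n → Fin n → ℝ) (x : Equiv.Perm (Fin n) → ℝ) : Prop :=
  ∀ i k : Fin n, i ≠ k → ∀ j : Fin n, 0 < prMatch x i j →
    (∑ b ∈ Finset.univ.filter (fun b : Equiv.Perm (Fin n) => b i = j), x b * v i (b k))
      ≤ v i j * prMatch x i j
/-- Valuations of the hard instance with `2k` agents and items: for `i < k` (agents
1..k), agent `i` values item `i` at `k/(k+1)`, item `i+k` at `1/(k+1)`, and the rest at
0; for `i ≥ k` (agents k+1..2k), agent `i` values the first `k` items at `1/(2k)+ε` and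
the last `k` items at `1/(2k)-ε`. -/
noncomputable def v12 (k : ℕ) (ε : ℝ) : Fin (2*k) → Fin (2*k) → ℝ := fun i j =>
  if (i : ℕ) < k then
    (if (j : ℕ) = (i : ℕ) then (k : ℝ) / ((k : ℝ) + 1)
     else if (j : ℕ) = (i : ℕ) + k then 1 / ((k : ℝ) + 1)
     else 0)
  else
    (if (j : ℕ) < k then 1 / (2 * (k : ℝ)) + ε else 1 / (2 * (k : ℝ)) - ε)

def IsProportional {n : ℕ} (v : Fin n → Fin n → ℝ) (b : Equiv.Perm (Fin n)) : Prop :=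
  ∀ i, ∑ j, v i j ≤ n * v i (b i)

/-- Summing the envy constraints of agent `i` at `j = b i` over all agents `m` (the term `m = i`
holds with equality) gives `(∑ⱼ v i j) · Pr[b(i) = j] ≤ n · v i j · Pr[b(i) = j]`. -/
theorem MIEF.isProportional {n : ℕ} {v : Fin n → Fin n → ℝ} {x : Equiv.Perm (Fin n) → ℝ}
    (hm : MIEF v x) (hx : ∀ b, 0 ≤ x b) {b : Equiv.Perm (Fin n)} (hb : 0 < x b) :
    IsProportional v b := by
  intro i
  set j := b i
  set S := univ.filter fun b' : Equiv.Perm (Fin n) => b' i = j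
  have hP : 0 < prMatch x i j :=
    hb.trans_le (single_le_sum (fun c _ => hx c) (mem_filter.2 ⟨mem_univ b, rfl⟩))
  have hcond : ∀ m, ∑ b' ∈ S, x b' * v i (b' m) ≤ v i j * prMatch x i j := by
    intro m
    rcases eq_or_ne i m with rfl | hne
    · rw [prMatch, mul_sum]
      exact (sum_congr rfl fun b' hb' => by rw [(mem_filter.1 hb').2, mul_comm]).le
    · exact hm i m hne j hP
  have htotal : (∑ j', v i j') * prMatch x i j ≤ (n * v i j) * prMatch x i j :=
    calc (∑ j', v i j') * prMatch x i j
        = ∑ m, ∑ b' ∈ S, x b' * v i (b' m) := by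
          rw [prMatch, sum_comm, mul_sum]
          refine sum_congr rfl fun b' _ => ?_
          rw [← mul_sum, Equiv.sum_comp b' (v i), mul_comm]
      _ ≤ ∑ _m : Fin n, v i j * prMatch x i j := sum_le_sum fun m _ => hcond m
      _ = (n * v i j) * prMatch x i j := by simp [mul_assoc]
  exact le_of_mul_le_mul_right htotal hP

theorem Equiv.Perm.apply_notMem_of_forall_notMem {α : Type*} [Fintype α] [DecidableEq α]
    (σ : Equiv.Perm α) {s : Finset α} (hcard : #s ≤ #sᶜ) (h : ∀ i ∉ s, σ i ∈ s)
    {i : α} (hi : i ∈ s) : σ i ∉ s := by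
  have himage : sᶜ.image σ = s :=
    eq_of_subset_of_card_le (image_subset_iff.2 fun i hi => h i (mem_compl.1 hi))
      (by rwa [card_image_of_injective _ σ.injective])
  intro hσi
  rw [← himage, mem_image] at hσi
  obtain ⟨i', hi', hσ⟩ := hσi
  exact mem_compl.1 (σ.injective hσ ▸ hi') hi

theorem sum_mul_le_of_forall_pos_le {ι : Type*} [Fintype ι] {x f : ι → ℝ} {C : ℝ}
    (hx : ∀ i, 0 ≤ x i) (hsum : ∑ i, x i = 1) (hf : ∀ i, 0 < x i → f i ≤ C) :
    ∑ i, x i * f i ≤ C :=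
  calc ∑ i, x i * f i ≤ ∑ i, x i * C := sum_le_sum fun i _ => by
        rcases (hx i).eq_or_lt with h | h
        · simp [← h]
        · exact mul_le_mul_of_nonneg_left (hf i h) h.le
    _ = C := by rw [← sum_mul, hsum, one_mul]

theorem card_filter_val_lt_two_mul (k : ℕ) : #{i : Fin (2 * k) | (i : ℕ) < k} = k := by
  rw [Fin.card_filter_val_lt]; omega

theorem sum_ite_val_lt_two_mul {M : Type*} [AddCommMonoid M] (k : ℕ) (c d : M) :
    ∑ i : Fin (2 * k), (if (i : ℕ) < k then c else d) = k • c + k • d := by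
  rw [sum_ite, sum_const, sum_const, ← compl_filter, card_compl, card_filter_val_lt_two_mul,
    Fintype.card_fin]
  congr 2; omega

section HardInstance

variable {k : ℕ} {ε : ℝ}

theorem sum_v12 (i : Fin (2 * k)) : ∑ j, v12 k ε i j = 1 := by
  have hk : k ≠ 0 := by have := i.isLt; omega
  by_cases hi : (i : ℕ) < k
  · rw [Fintype.sum_eq_add i ⟨i + k, by omega⟩ (by simp [Fin.ext_iff, hk])]
    · simp [v12, hi, hk]
      field_simp
    · rintro j ⟨h1, h2⟩
      simp only [v12, hi, if_true, ne_eq, Fin.ext_iff] at h1 h2 ⊢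
      rw [if_neg h1, if_neg h2]
  · simp only [v12, hi, if_false]
    rw [sum_ite_val_lt_two_mul, nsmul_eq_mul, nsmul_eq_mul]
    field_simp
    ring

theorem sum_v12_apply_self (hk : 0 < k) :
    ∑ i, v12 k ε i i = (k : ℝ) ^ 2 / ((k : ℝ) + 1) + 1 / 2 - k * ε := by
  have hdiag : ∀ i : Fin (2 * k),
      v12 k ε i i = if (i : ℕ) < k then (k : ℝ) / (k + 1) else 1 / (2 * k) - ε := by
    intro i
    by_cases hi : (i : ℕ) < k <;> simp [v12, hi]
  rw [sum_congr rfl fun i _ => hdiag i, sum_ite_val_lt_two_mul, nsmul_eq_mul, nsmul_eq_mul]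
  field_simp
  ring

theorem IsProportional.one_le_two_mul_v12 {b : Equiv.Perm (Fin (2 * k))}
    (hb : IsProportional (v12 k ε) b) (i : Fin (2 * k)) : 1 ≤ 2 * (k : ℝ) * v12 k ε i (b i) := by
  have := hb i
  rwa [sum_v12, Nat.cast_mul, Nat.cast_ofNat] at this

theorem IsProportional.v12_val_apply_lt {b : Equiv.Perm (Fin (2 * k))}
    (hb : IsProportional (v12 k ε) b) (hε : 0 < ε) {i : Fin (2 * k)} (hi : k ≤ (i : ℕ)) :
    (b i : ℕ) < k := by
  by_contra h
  have hshare := hb.one_le_two_mul_v12 i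
  have hk : (0 : ℝ) < k := by have := i.isLt; exact_mod_cast (by omega : 0 < k)
  simp only [v12, if_neg (not_lt.2 hi), if_neg h, mul_sub,
    mul_one_div_cancel (by positivity : 2 * (k : ℝ) ≠ 0)] at hshare
  nlinarith

theorem IsProportional.v12_val_apply_eq_add {b : Equiv.Perm (Fin (2 * k))}
    (hb : IsProportional (v12 k ε) b) (hε : 0 < ε) {i : Fin (2 * k)} (hi : (i : ℕ) < k) :
    (b i : ℕ) = i + k := by
  have hhigh : k ≤ (b i : ℕ) := by
    have hcard : #{j : Fin (2 * k) | (j : ℕ) < k} ≤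
        #({j : Fin (2 * k) | (j : ℕ) < k} : Finset _)ᶜ := by
      rw [card_compl, card_filter_val_lt_two_mul, Fintype.card_fin]; omega
    have := b.apply_notMem_of_forall_notMem hcard
      (fun j hj => by simpa using hb.v12_val_apply_lt hε (by simpa using hj)) (by simpa using hi)
    simpa using this
  by_contra h
  have hshare := hb.one_le_two_mul_v12 i
  norm_num [v12, hi, h, show (b i : ℕ) ≠ i by omega] at hshare

theorem IsProportional.sum_v12_apply {b : Equiv.Perm (Fin (2 * k))}
    (hb : IsProportional (v12 k ε) b) (hε : 0 < ε) (hk : 0 < k) :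
    ∑ i, v12 k ε i (b i) = (k : ℝ) / ((k : ℝ) + 1) + 1 / 2 + k * ε := by
  have hval : ∀ i : Fin (2 * k),
      v12 k ε i (b i) = if (i : ℕ) < k then 1 / ((k : ℝ) + 1) else 1 / (2 * k) + ε := by
    intro i
    by_cases hi : (i : ℕ) < k
    · simp [v12, hi, hb.v12_val_apply_eq_add hε hi, hk.ne']
    · simp [v12, hi, hb.v12_val_apply_lt hε (not_lt.1 hi)]
  rw [sum_congr rfl fun i _ => hval i, sum_ite_val_lt_two_mul, nsmul_eq_mul, nsmul_eq_mul]
  field_simp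
  ring

end HardInstance

theorem price_of_iEF_utilitarian_lower_general (k : ℕ) (hk : 2 ≤ k)
    (ε : ℝ) (hε : 0 < ε) :
    (∃ b : Equiv.Perm (Fin (2*k)),
      (k : ℝ)^2 / ((k : ℝ) + 1) + 1/2 - (k : ℝ) * ε ≤ ∑ i, v12 k ε i (b i)) ∧
    (∀ x : Equiv.Perm (Fin (2*k)) → ℝ,
      (∀ b, 0 ≤ x b) → (∑ b, x b = 1) → MIEF (v12 k ε) x →
      (∑ b, x b * ∑ i, v12 k ε i (b i)) ≤ (k : ℝ) / ((k : ℝ) + 1) + 1/2 + (k : ℝ) * ε) := by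
  have hk0 : 0 < k := by omega
  refine ⟨⟨Equiv.refl _, (sum_v12_apply_self hk0).ge⟩, fun x hx hsum hmief => ?_⟩
  exact sum_mul_le_of_forall_pos_le hx hsum fun b hb =>
    ((hmief.isProportional hx hb).sum_v12_apply hε hk0).le

/-- the optimal utilitarian welfare of the instance is at least
`k²/(k+1) + 1/2 - kε`, while every iEF lottery has expected utilitarian welfare at most
`k/(k+1) + 1/2 + kε`; hence the price of iEF w.r.t. utilitarian welfare is Ω(n). -/
theorem price_of_iEF_utilitarian_lower (k : ℕ) (hk : 2 ≤ k)
    (ε : ℝ) (hε : 0 < ε) (hε' : ε < 1 / (2 * (k : ℝ))) :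
    (∃ b : Equiv.Perm (Fin (2*k)),
      (k : ℝ)^2 / ((k : ℝ) + 1) + 1/2 - (k : ℝ) * ε ≤ ∑ i, v12 k ε i (b i)) ∧
    (∀ x : Equiv.Perm (Fin (2*k)) → ℝ,
      (∀ b, 0 ≤ x b) → (∑ b, x b = 1) → MIEF (v12 k ε) x →
      (∑ b, x b * ∑ i, v12 k ε i (b i)) ≤ (k : ℝ) / ((k : ℝ) + 1) + 1/2 + (k : ℝ) * ε) :=
  price_of_iEF_utilitarian_lower_general k hk ε hε
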